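/- arXiv:2206.06459 — 2 statements merged into one kernel-verified Lean document; each statement's English description precedes it below -/
import Mathlib

section
/- The function i ↦ δmin(i)/(i−1) is non-increasing on integers i ≥ 2; that is, for all integers 2 ≤ i ≤ j, δmin(j)/(j−1) ≤ δmin(i)/(i−1). -/
/-- `mfn i = ⌊(−3 + √(1+8i))/2⌋`, the greatest integer `m` with `C(m+2,2) ≤ i`. -/
noncomputable def mfn (i : ℕ) : ℕ :=
  Nat.floor ((-3 + Real.sqrt (1 + 8 * (i : ℝ))) / 2)

/-- `δmin(i) = max((m(i)+3)/2, (i−1)/(m(i)+1))`. -/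
noncomputable def deltaMin (i : ℕ) : ℝ :=
  max (((mfn i : ℝ) + 3) / 2) (((i : ℝ) - 1) / ((mfn i : ℝ) + 1))

lemma mfn_spec (i : ℕ) (hi : 1 ≤ i) :
    (mfn i + 1) * (mfn i + 2) ≤ 2 * i ∧ 2 * i < (mfn i + 2) * (mfn i + 3) := by
  have h8 : (9:ℝ) ≤ 1 + 8 * i := by
    have : (1:ℝ) ≤ i := by exact_mod_cast hi
    linarith
  have hs3 : (3:ℝ) ≤ Real.sqrt (1 + 8 * i) := by
    have : Real.sqrt 9 ≤ Real.sqrt (1 + 8 * i) := Real.sqrt_le_sqrt h8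
    have h9 : Real.sqrt 9 = 3 := by
      rw [show (9:ℝ) = 3^2 by norm_num, Real.sqrt_sq (by norm_num)]
    linarith
  have hx0 : 0 ≤ (-3 + Real.sqrt (1 + 8 * (i : ℝ))) / 2 := by linarith
  have hfl : ((mfn i : ℕ):ℝ) ≤ (-3 + Real.sqrt (1 + 8 * (i : ℝ))) / 2 := Nat.floor_le hx0
  have hfu : (-3 + Real.sqrt (1 + 8 * (i : ℝ))) / 2 < (mfn i : ℝ) + 1 :=
    Nat.lt_floor_add_one _
  set M : ℝ := (mfn i : ℝ) with hM
  have hM0 : 0 ≤ M := Nat.cast_nonneg _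
  have hsq : (2*M+3)^2 ≤ 1 + 8 * i := by
    have h1 : 2*M+3 ≤ Real.sqrt (1 + 8 * i) := by linarith
    have := (Real.le_sqrt' (show (0:ℝ) < 2*M+3 by positivity)).mp h1
    linarith [this]
  have hsq2 : 1 + 8 * (i:ℝ) < (2*M+5)^2 := by
    have h1 : Real.sqrt (1 + 8 * i) < 2*M+5 := by linarith
    have h2 : Real.sqrt (1 + 8 * i) ^ 2 = 1 + 8 * i := Real.sq_sqrt (by linarith)
    nlinarith [Real.sqrt_nonneg (1 + 8 * (i:ℝ))]
  constructor
  · have : ((mfn i + 1) * (mfn i + 2) : ℝ) ≤ ((2 * i : ℕ) : ℝ) := by push_cast; nlinarith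
    exact_mod_cast this
  · have : ((2 * i : ℕ) : ℝ) < ((mfn i + 2) * (mfn i + 3) : ℝ) := by push_cast; nlinarith
    exact_mod_cast this

lemma mfn_eq (i m : ℕ) (hi : 1 ≤ i) (h1 : (m + 1) * (m + 2) ≤ 2 * i)
    (h2 : 2 * i < (m + 2) * (m + 3)) : mfn i = m := by
  obtain ⟨s1, s2⟩ := mfn_spec i hi
  set m' := mfn i
  by_contra hne
  rcases Nat.lt_or_ge m' m with h | h
  · have : m' + 1 ≤ m := h
    nlinarith
  · have : m + 1 ≤ m' := by omega
    nlinarith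

lemma step (j : ℕ) (hj : 2 ≤ j) :
    deltaMin (j+1) / ((j : ℝ) + 1 - 1) ≤ deltaMin j / ((j : ℝ) - 1) := by
  obtain ⟨s1, s2⟩ := mfn_spec j (by omega)
  set m := mfn j with hm
  have hJ : (2:ℝ) ≤ (j:ℝ) := by exact_mod_cast hj
  have hM0 : (0:ℝ) ≤ (m:ℝ) := Nat.cast_nonneg _
  have hJ0 : (0:ℝ) < (j:ℝ) + 1 - 1 := by linarith
  have hJ1 : (0:ℝ) < (j:ℝ) - 1 := by linarith
  have heven : Even ((m+2)*(m+3)) := by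
    have h3 : m+3 = (m+2)+1 := rfl
    rw [h3]; exact Nat.even_mul_succ_self (m+2)
  obtain ⟨k, hk⟩ := heven
  rcases lt_or_eq_of_le (show 2*j + 2 ≤ (m+2)*(m+3) by omega) with hlt | heq
  · -- mfn (j+1) = m
    have hm' : mfn (j+1) = m := mfn_eq (j+1) m (by omega) (by linarith [s1]) (by linarith [hlt])
    rw [div_le_div_iff₀ hJ0 hJ1]
    unfold deltaMin
    rw [hm']
    push_cast
    rw [max_mul_of_nonneg _ _ (by linarith : (0:ℝ) ≤ (j:ℝ) - 1)]
    apply max_le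
    · calc ((m:ℝ) + 3) / 2 * ((j:ℝ) - 1) ≤ ((m:ℝ) + 3) / 2 * ((j:ℝ) + 1 - 1) := by
            apply mul_le_mul_of_nonneg_left (by linarith) (by linarith)
        _ ≤ _ := mul_le_mul_of_nonneg_right (le_max_left _ _) (by linarith)
    · have : ((j:ℝ) + 1 - 1) / ((m:ℝ) + 1) * ((j:ℝ) - 1)
          = ((j:ℝ) - 1) / ((m:ℝ) + 1) * ((j:ℝ) + 1 - 1) := by ring
      rw [this]
      exact mul_le_mul_of_nonneg_right (le_max_right _ _) (by linarith)
  · -- mfn (j+1) = m + 1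
    have hm' : mfn (j+1) = m + 1 := by
      apply mfn_eq (j+1) (m+1) (by omega) (by nlinarith [heq]) (by nlinarith [heq])
    have hkey : 2 * ((j:ℝ)) = ((m:ℝ) + 1) * ((m:ℝ) + 4) := by
      have : (2*j + 2 : ℝ) = (((m+2)*(m+3) : ℕ) : ℝ) := by
        push_cast [← heq]; ring
      push_cast at this; nlinarith
    rw [div_le_div_iff₀ hJ0 hJ1]
    unfold deltaMin
    rw [hm']
    push_cast
    rw [max_mul_of_nonneg _ _ (by linarith : (0:ℝ) ≤ (j:ℝ) - 1)]
    have hb : ((m:ℝ) + 1 + 3) / 2 * ((j:ℝ) - 1)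
        ≤ ((j:ℝ) - 1) / ((m:ℝ) + 1) * ((j:ℝ) + 1 - 1) := by
      rw [div_mul_eq_mul_div, div_mul_eq_mul_div, div_le_div_iff₀ (by norm_num) (by linarith)]
      nlinarith
    apply max_le
    · exact hb.trans (mul_le_mul_of_nonneg_right (le_max_right _ _) (by linarith))
    · have hc : ((j:ℝ) + 1 - 1) / ((m:ℝ) + 1 + 1) * ((j:ℝ) - 1)
          ≤ ((m:ℝ) + 1 + 3) / 2 * ((j:ℝ) - 1) := by
        apply mul_le_mul_of_nonneg_right _ (by linarith)
        rw [div_le_div_iff₀ (by linarith) (by norm_num)]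
        nlinarith
      exact hc.trans (hb.trans (mul_le_mul_of_nonneg_right (le_max_right _ _) (by linarith)))

/-- The function `i ↦ δmin(i)/(i−1)` is non-increasing on integers `i ≥ 2`. -/
theorem stmt_3 (i j : ℕ) (hi : 2 ≤ i) (hij : i ≤ j) :
    deltaMin j / ((j : ℝ) - 1) ≤ deltaMin i / ((i : ℝ) - 1) := by
  induction j, hij using Nat.le_induction with
  | base => exact le_refl _
  | succ n hn ih =>
    have hstep := step n (le_trans hi hn)
    calc deltaMin (n+1) / (((n+1 : ℕ):ℝ) - 1) = deltaMin (n+1) / ((n:ℝ) + 1 - 1) := by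
          push_cast; ring_nf
      _ ≤ deltaMin n / ((n:ℝ) - 1) := hstep
      _ ≤ _ := ih
end

section
/- Let n, M, i be integers with n ≥ 2, M ≥ n, and 2n−1 ≤ i ≤ M+n−1. Let u₀, …, uₙ be the standard basis of ℝ^{n+1}. For 0 ≤ s ≤ n−1 let D_s = cone{u₀, …, u_s}, and for n ≤ s ≤ 2n−1 let D_s = cone{u_{j+1} + u_j : s−n ≤ j ≤ n−1}. For 0 ≤ s ≤ 2n−1 let T_s : ℝ^{n+1} → ℝ^{n+1} be the diagonal linear map multiplying the j-th coordinate by the binomial coefficient C(i−j, i−s) (equal to 0 when i−s > i−j). Then the convex cone generated by the union of the sets T_s(D_s) over all integers s with max(0, i−M) ≤ s ≤ 2n−1 equals cone{u₀, …, u_{n−1}, n·uₙ + (i−n+1)·u_{n−1}}. -/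
open Finset

/-- `nonnegSpan S` is the set of (finite) nonnegative real linear combinations of
elements of `S`, i.e. the convex cone generated by `S` (together with `0`). -/
def nonnegSpan {V : Type*} [AddCommMonoid V] [Module ℝ V] (S : Set V) : Set V :=
  { x | ∃ (k : ℕ) (c : Fin k → ℝ) (v : Fin k → V),
      (∀ t, 0 ≤ c t) ∧ (∀ t, v t ∈ S) ∧ x = ∑ t, c t • v t }

/-- The standard basis vector `u_j` of `ℝ^{n+1}`. -/
def stdb (n : ℕ) (j : Fin (n + 1)) : Fin (n + 1) → ℝ := Pi.single j 1

/-!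
Every generator of a cone `T_s(D_s)` other than the image of the last edge `u_n + u_{n-1}` is a
nonnegative combination of `u_0, …, u_{n-1}`. For that edge, the absorption identity
`(i-n+1) C(i-n, i-s) = (s-n+1) C(i-n+1, i-s)` shows that its image `a u_n + b u_{n-1}` satisfies
`(i-n+1) a ≤ n b` because `s ≤ 2n-1`, so it lies between `u_{n-1}` and the ray
`w = n u_n + (i-n+1) u_{n-1}`, and it is a positive multiple of `w` when `s = 2n-1`. Conversely, each `u_j` with
`j ≤ n-1` is a positive multiple of `T_{n-1} u_j`, because `C(i-j, i-n+1) > 0`.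
-/

theorem nonnegSpan_eq_hull {V : Type*} [AddCommMonoid V] [Module ℝ V] (S : Set V) :
    nonnegSpan S = PointedCone.hull ℝ S := by
  ext x
  rw [SetLike.mem_coe, Submodule.mem_span_set']
  constructor
  · rintro ⟨k, c, v, hc, hv, rfl⟩
    exact ⟨k, fun t => ⟨c t, hc t⟩, fun t => ⟨v t, hv t⟩, rfl⟩
  · rintro ⟨k, c, v, rfl⟩
    exact ⟨k, fun t => c t, fun t => v t, fun t => (c t).2, fun t => (v t).2, rfl⟩

namespace PointedCone

variable {R E F : Type*}

theorem image_hull_subset_iff [Semiring R] [PartialOrder R] [IsOrderedRing R]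
    [AddCommMonoid E] [Module R E] [AddCommMonoid F] [Module R F]
    (f : E →ₗ[R] F) (G : Set E) (K : PointedCone R F) :
    f '' hull R G ⊆ K ↔ ∀ g ∈ G, f g ∈ K :=
  Submodule.image_span_subset (f.restrictScalars _) G K

theorem smul_add_smul_mem_of_mul_le [Field R] [LinearOrder R] [IsStrictOrderedRing R]
    [AddCommGroup E] [Module R E] (K : PointedCone R E) {e f : E}
    {α γ p q : R} (hα : 0 < α) (hp : 0 ≤ p) (hw : α • e + γ • f ∈ K) (hf : f ∈ K)
    (h : γ * p ≤ α * q) : p • e + q • f ∈ K := by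
  have hsplit :
      p • e + q • f = (p / α) • (α • e + γ • f) + ((α * q - γ * p) / α) • f := by
    rw [smul_add, smul_smul, smul_smul, add_assoc, ← add_smul]
    congr 2 <;> field_simp; ring
  rw [hsplit]
  exact K.add_mem (K.smul_mem (div_nonneg hp hα.le) hw)
    (K.smul_mem (div_nonneg (sub_nonneg.2 h) hα.le) hf)

end PointedCone

theorem mul_stdb {n : ℕ} (a : Fin (n + 1) → ℝ) (j : Fin (n + 1)) :
    a * stdb n j = a j • stdb n j := by
  rw [stdb, ← Pi.single_mul_right, mul_one, ← Pi.single_smul, smul_eq_mul, mul_one]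

theorem stdb_mem_image_mul_hull {n : ℕ} {a : Fin (n + 1) → ℝ} {G : Set (Fin (n + 1) → ℝ)}
    {j : Fin (n + 1)} (ha : 0 < a j) (hj : stdb n j ∈ G) :
    stdb n j ∈ (fun y : Fin (n + 1) → ℝ => fun j => a j * y j) '' PointedCone.hull ℝ G := by
  refine ⟨(a j)⁻¹ • stdb n j,
    PointedCone.smul_mem _ (inv_nonneg.2 ha.le) (Submodule.subset_span hj), ?_⟩
  change a * ((a j)⁻¹ • stdb n j) = stdb n j
  rw [mul_smul_comm, mul_stdb, smul_smul, inv_mul_cancel₀ ha.ne', one_smul]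

theorem cast_sub_add_one_mul_choose {n s i : ℕ} (hns : n ≤ s) (hsi : s ≤ i) :
    ((i : ℝ) - n + 1) * (i - n).choose (i - s)
      = ((s - n + 1 : ℕ) : ℝ) * (i - n + 1).choose (i - s) := by
  have h := Nat.choose_mul_succ_eq (i - n) (i - s)
  rw [show i - n + 1 - (i - s) = s - n + 1 by omega] at h
  rw [show (i : ℝ) - n + 1 = ((i - n + 1 : ℕ) : ℝ) by push_cast [(by omega : n ≤ i)]; ring]
  exact_mod_cast (mul_comm _ _).trans (h.trans (mul_comm _ _))

-- `T_s` is multiplication by `binomWeight n i s`; `Nat.choose` returns `0` when `i - s > i - j`,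
-- matching the paper's convention.
def binomWeight (n i s : ℕ) : Fin (n + 1) → ℝ :=
  fun j => ((i - (j : ℕ)).choose (i - s) : ℝ)

def lastRay (n i : ℕ) : Fin (n + 1) → ℝ :=
  (n : ℝ) • stdb n (Fin.last n) + ((i : ℝ) - n + 1) • stdb n ⟨n - 1, by omega⟩

def targetCone (n i : ℕ) : PointedCone ℝ (Fin (n + 1) → ℝ) :=
  PointedCone.hull ℝ
    ({ x | ∃ j : Fin (n + 1), (j : ℕ) ≤ n - 1 ∧ x = stdb n j } ∪ {lastRay n i})

section

variable {n i : ℕ}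

theorem stdb_mem_targetCone {j : Fin (n + 1)} (hj : (j : ℕ) ≤ n - 1) :
    stdb n j ∈ targetCone n i :=
  Submodule.subset_span (Or.inl ⟨j, hj, rfl⟩)

theorem lastRay_mem_targetCone : lastRay n i ∈ targetCone n i :=
  Submodule.subset_span (Or.inr rfl)

theorem lastEdge_mem_targetCone {s : ℕ} (hns : n ≤ s) (hs : s < 2 * n) (hsi : s ≤ i) :
    ((i - n).choose (i - s) : ℝ) • stdb n (Fin.last n)
      + ((i - n + 1).choose (i - s) : ℝ) • stdb n ⟨n - 1, by omega⟩ ∈ targetCone n i := by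
  refine (targetCone n i).smul_add_smul_mem_of_mul_le (α := n) (γ := (i : ℝ) - n + 1)
    (by exact_mod_cast (by omega : 0 < n)) (Nat.cast_nonneg _) lastRay_mem_targetCone
    (stdb_mem_targetCone le_rfl) ?_
  rw [cast_sub_add_one_mul_choose hns hsi]
  exact mul_le_mul_of_nonneg_right (by exact_mod_cast (by omega : s - n + 1 ≤ n))
    (Nat.cast_nonneg _)

theorem binomWeight_mul_edge_mem_targetCone {s j : ℕ} (hj : j < n) (hns : n ≤ s)
    (hs : s < 2 * n) (hsi : s ≤ i) :
    binomWeight n i s * (stdb n ⟨j + 1, by omega⟩ + stdb n ⟨j, by omega⟩)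
      ∈ targetCone n i := by
  rw [mul_add, mul_stdb, mul_stdb]
  rcases Nat.lt_or_ge (j + 1) n with hj' | hj'
  · exact (targetCone n i).add_mem
      ((targetCone n i).smul_mem (Nat.cast_nonneg _) (stdb_mem_targetCone (by simp; omega)))
      ((targetCone n i).smul_mem (Nat.cast_nonneg _) (stdb_mem_targetCone (by simp; omega)))
  · obtain rfl : j = n - 1 := by omega
    have h1 : i - (n - 1 + 1) = i - n := by omega
    have h2 : i - (n - 1) = i - n + 1 := by omega
    convert lastEdge_mem_targetCone hns hs hsi using 3
    · simp [binomWeight, h1]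
    · congr 1; exact Fin.ext (by simp; omega)
    · simp [binomWeight, h2]

theorem lastRay_mem_image (hn : 0 < n) (hi : 2 * n - 1 ≤ i) :
    lastRay n i ∈ (fun y : Fin (n + 1) → ℝ => fun j => binomWeight n i (2 * n - 1) j * y j) ''
      PointedCone.hull ℝ { x | ∃ j : ℕ, ∃ _ : 2 * n - 1 - n ≤ j, ∃ _ : j ≤ n - 1,
        x = stdb n ⟨j + 1, by omega⟩ + stdb n ⟨j, by omega⟩ } := by
  set a : ℕ := (i - n).choose (i - (2 * n - 1))
  set b : ℕ := (i - n + 1).choose (i - (2 * n - 1))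
  have ha : (0 : ℝ) < a := by exact_mod_cast Nat.choose_pos (by omega)
  have hab : ((i : ℝ) - n + 1) * a = n * b := by
    rw [cast_sub_add_one_mul_choose (by omega) hi, show 2 * n - 1 - n + 1 = n by omega]
  refine ⟨((n : ℝ) / a) • (stdb n ⟨n - 1 + 1, by omega⟩ + stdb n ⟨n - 1, by omega⟩),
    PointedCone.smul_mem _ (by positivity)
      (Submodule.subset_span ⟨n - 1, by omega, le_rfl, rfl⟩), ?_⟩
  change binomWeight n i (2 * n - 1) * _ = _
  have hlast : (⟨n - 1 + 1, by omega⟩ : Fin (n + 1)) = Fin.last n := Fin.ext (by simp; omega)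
  have hwa : binomWeight n i (2 * n - 1) (Fin.last n) = a := rfl
  have hwb : binomWeight n i (2 * n - 1) ⟨n - 1, by omega⟩ = b := by
    simp only [binomWeight, b]; congr 2; omega
  rw [mul_smul_comm, mul_add, mul_stdb, mul_stdb, hlast, hwa, hwb, smul_add, smul_smul,
    smul_smul, lastRay]
  congr 2
  · field_simp
  · field_simp; linarith

end

/-- Let `n, M, i` be integers with `n ≥ 2`, `M ≥ n` and `2n−1 ≤ i ≤ M+n−1`.  With
`u₀, …, uₙ` the standard basis of `ℝ^{n+1}`, set `D_s = cone{u₀,…,u_s}` for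
`0 ≤ s ≤ n−1` and `D_s = cone{u_{j+1} + u_j : s−n ≤ j ≤ n−1}` for `n ≤ s ≤ 2n−1`,
and let `T_s` be the diagonal map multiplying the `j`-th coordinate by `C(i−j, i−s)`.
Then the convex cone generated by the union of the `T_s(D_s)` over
`max(0, i−M) ≤ s ≤ 2n−1` equals `cone{u₀, …, u_{n−1}, n·uₙ + (i−n+1)·u_{n−1}}`. -/
theorem stmt_13 (n M i : ℕ) (hn : 2 ≤ n)
    (hi1 : 2 * n - 1 ≤ i) (hi2 : i ≤ M + n - 1) :
    nonnegSpan (⋃ s ∈ Set.Icc (max 0 (i - M)) (2 * n - 1),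
      (fun y : Fin (n + 1) → ℝ => fun j : Fin (n + 1) =>
          ((i - (j : ℕ)).choose (i - s) : ℝ) * y j) ''
        (if s < n then
          nonnegSpan { x | ∃ j : Fin (n + 1), (j : ℕ) ≤ s ∧ x = stdb n j }
        else
          nonnegSpan { x | ∃ j : ℕ, ∃ _ : s - n ≤ j, ∃ _ : j ≤ n - 1,
            x = stdb n ⟨j + 1, by omega⟩ + stdb n ⟨j, by omega⟩ }))
      = nonnegSpan
          ({ x | ∃ j : Fin (n + 1), (j : ℕ) ≤ n - 1 ∧ x = stdb n j } ∪
            {(n : ℝ) • stdb n ⟨n, by omega⟩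
              + ((i : ℝ) - n + 1) • stdb n ⟨n - 1, by omega⟩}) := by
  simp only [nonnegSpan_eq_hull]
  change _ = ((targetCone n i : Set (Fin (n + 1) → ℝ)))
  refine congrArg SetLike.coe (le_antisymm (Submodule.span_le.2 ?_) (Submodule.span_le.2 ?_))
  · refine Set.iUnion₂_subset fun s hs => ?_
    split_ifs with hsn <;> refine
      (PointedCone.image_hull_subset_iff (LinearMap.mulLeft ℝ (binomWeight n i s)) _ _).2 ?_
    · rintro _ ⟨j, hj, rfl⟩
      rw [LinearMap.mulLeft_apply, mul_stdb]
      exact (targetCone n i).smul_mem (Nat.cast_nonneg _) (stdb_mem_targetCone (by omega))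
    · rintro _ ⟨j, hj1, hj2, rfl⟩
      exact binomWeight_mul_edge_mem_targetCone (by omega) (by omega) (by omega) (by omega)
  · rintro _ (⟨j, hj, rfl⟩ | rfl)
    · refine Submodule.subset_span (Set.mem_biUnion (x := n - 1) ?_ ?_)
      · exact ⟨max_le (Nat.zero_le _) (by omega), by omega⟩
      rw [if_pos (by omega)]
      exact stdb_mem_image_mul_hull (a := binomWeight n i (n - 1))
        (Nat.cast_pos.2 (Nat.choose_pos (by omega))) ⟨j, hj, rfl⟩
    · refine Submodule.subset_span (Set.mem_biUnion (x := 2 * n - 1) ?_ ?_)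
      · exact ⟨max_le (Nat.zero_le _) (by omega), le_rfl⟩
      rw [if_neg (by omega)]
      exact lastRay_mem_image (by omega) hi1
end
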